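/- There is no order isomorphism between ([0,1], ≤) and (Ĩ, ≤_XY). -/

import Mathlib

/-- The set of intuitionistic fuzzy values Ĩ = {⟨μ,ν⟩ ∈ [0,1]² : μ + ν ≤ 1}. -/
def IFV : Set (ℝ × ℝ) :=
  {p | 0 ≤ p.1 ∧ p.1 ≤ 1 ∧ 0 ≤ p.2 ∧ p.2 ≤ 1 ∧ p.1 + p.2 ≤ 1}

/-- Score function s(α) = μ_α − ν_α. -/
def sc (p : ℝ × ℝ) : ℝ := p.1 - p.2

/-- Accuracy function h(α) = μ_α + ν_α. -/
def ac (p : ℝ × ℝ) : ℝ := p.1 + p.2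

/-- Strict Xu–Yager order. -/
def ltXY (a b : ℝ × ℝ) : Prop := sc a < sc b ∨ (sc a = sc b ∧ ac a < ac b)

/-- Nonstrict Xu–Yager order. -/
def leXY (a b : ℝ × ℝ) : Prop := sc a < sc b ∨ (sc a = sc b ∧ ac a ≤ ac b)

/-- The space of IFVs as a type. -/
def IFVt : Type := {p : ℝ × ℝ // p ∈ IFV}

/-- The linear order on IFVs given by the Xu–Yager order
(lexicographic in (score, accuracy)). -/
noncomputable instance : LinearOrder IFVt :=
  LinearOrder.lift' (fun x : IFVt => toLex (sc x.1, ac x.1)) (by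
    intro x y hxy
    have h1 : sc x.1 = sc y.1 := congrArg (fun z => (ofLex z).1) hxy
    have h2 : ac x.1 = ac y.1 := congrArg (fun z => (ofLex z).2) hxy
    simp only [sc, ac] at h1 h2
    have e1 : x.1.1 = y.1.1 := by linarith
    have e2 : x.1.2 = y.1.2 := by linarith
    exact Subtype.ext (Prod.ext e1 e2))

/-- The order topology on IFVs induced by the linear order <_XY. -/
noncomputable instance : TopologicalSpace IFVt := Preorder.topology IFVt

instance : OrderTopology IFVt := ⟨rfl⟩

lemma IFVt.lt_iff (a b : IFVt) :
    a < b ↔ sc a.1 < sc b.1 ∨ (sc a.1 = sc b.1 ∧ ac a.1 < ac b.1) := by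
  show toLex (sc a.1, ac a.1) < toLex (sc b.1, ac b.1) ↔ _
  rw [Prod.Lex.lt_iff]; rfl

noncomputable def sig (s : ℝ) : ℝ := s / (1 + |s|)

lemma sig_abs_lt_one (s : ℝ) : |sig s| < 1 := by
  rw [sig, abs_div, abs_of_pos (by positivity : (0:ℝ) < 1 + |s|),
    div_lt_one (by positivity)]
  linarith [abs_nonneg s]

lemma sig_strictMono : StrictMono sig := by
  intro s s' h
  rw [sig, sig, div_lt_div_iff₀ (by positivity) (by positivity)]
  rcases abs_cases s with ⟨e1, _⟩ | ⟨e1, _⟩ <;>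
    rcases abs_cases s' with ⟨e2, _⟩ | ⟨e2, _⟩ <;> rw [e1, e2] <;> nlinarith

noncomputable def bpt (s : ℝ) : IFVt :=
  ⟨(max (sig s) 0, max (-(sig s)) 0), by
    have h := sig_abs_lt_one s
    rw [abs_lt] at h
    rcases le_total (sig s) 0 with hc | hc
    · rw [max_eq_right hc, max_eq_left (neg_nonneg.mpr hc)]
      refine ⟨?_, ?_, ?_, ?_, ?_⟩ <;> dsimp only <;> linarith
    · rw [max_eq_left hc, max_eq_right (neg_nonpos.mpr hc)]
      refine ⟨?_, ?_, ?_, ?_, ?_⟩ <;> dsimp only <;> linarith⟩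

noncomputable def tpt (s : ℝ) : IFVt :=
  ⟨((1 + sig s) / 2, (1 - sig s) / 2), by
    have h := sig_abs_lt_one s
    rw [abs_lt] at h
    refine ⟨by linarith, by linarith, by linarith, by linarith, by linarith⟩⟩

lemma sc_bpt (s : ℝ) : sc (bpt s).1 = sig s := by
  rcases le_total (sig s) 0 with hc | hc
  · simp [bpt, sc, max_eq_right hc, max_eq_left (neg_nonneg.mpr hc)]
  · simp [bpt, sc, max_eq_left hc, max_eq_right (neg_nonpos.mpr hc)]

lemma ac_bpt (s : ℝ) : ac (bpt s).1 = |sig s| := by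
  rcases le_total (sig s) 0 with hc | hc
  · simp [bpt, ac, abs_of_nonpos hc, max_eq_right hc, max_eq_left (neg_nonneg.mpr hc)]
  · simp [bpt, ac, abs_of_nonneg hc, max_eq_left hc, max_eq_right (neg_nonpos.mpr hc)]

lemma sc_tpt (s : ℝ) : sc (tpt s).1 = sig s := by simp [tpt, sc]; ring

lemma ac_tpt (s : ℝ) : ac (tpt s).1 = 1 := by simp [tpt, ac]; ring

lemma bpt_lt_tpt (s : ℝ) : bpt s < tpt s := by
  rw [IFVt.lt_iff]
  right
  rw [sc_bpt, sc_tpt, ac_bpt, ac_tpt]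
  exact ⟨rfl, sig_abs_lt_one s⟩

lemma tpt_lt_bpt (s s' : ℝ) (h : s < s') : tpt s < bpt s' := by
  rw [IFVt.lt_iff]
  left
  rw [sc_bpt, sc_tpt]
  exact sig_strictMono h

/-- There is no order isomorphism between ([0,1], ≤) and (Ĩ, ≤_XY). -/
theorem ifv_not_order_iso_unit_interval :
    ¬ Nonempty (Set.Icc (0 : ℝ) 1 ≃o IFVt) := by
  rintro ⟨f⟩
  have key : ∀ s : ℝ, ((f.symm (bpt s) : Set.Icc (0:ℝ) 1) : ℝ)
      < ((f.symm (tpt s) : Set.Icc (0:ℝ) 1) : ℝ) := by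
    intro s
    exact_mod_cast f.symm.strictMono (bpt_lt_tpt s)
  choose q hq1 hq2 using fun s => exists_rat_btwn (key s)
  have hmono : StrictMono q := by
    intro s s' h
    have h2 : ((f.symm (tpt s) : Set.Icc (0:ℝ) 1) : ℝ)
        < ((f.symm (bpt s') : Set.Icc (0:ℝ) 1) : ℝ) := by
      exact_mod_cast f.symm.strictMono (tpt_lt_bpt s s' h)
    have : (q s : ℝ) < (q s' : ℝ) := by
      calc (q s : ℝ) < _ := hq2 s
        _ < _ := h2
        _ < _ := hq1 s'
    exact_mod_cast this
  have : Countable ℝ := hmono.injective.countable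
  exact (not_countable (α := ℝ)) this
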